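/- With W1A2, W1A1, W2A2, W2A1 semantics of the multi-stakeholder query P(ψ₁, ψ₂, A) defined as the intersection of ⟦ψ₁⟧ with the corresponding witness set (W1 or W2) and agreement set (A1 or A2), the following inclusions hold: ⟦P(ψ₁,ψ₂,A)⟧^{W1A2} ⊆ ⟦P(ψ₁,ψ₂,A)⟧^{W1A1}, ⟦P(ψ₁,ψ₂,A)⟧^{W1A2} ⊆ ⟦P(ψ₁,ψ₂,A)⟧^{W2A2}, ⟦P(ψ₁,ψ₂,A)⟧^{W1A1} ⊆ ⟦P(ψ₁,ψ₂,A)⟧^{W2A1}, and ⟦P(ψ₁,ψ₂,A)⟧^{W2A2} ⊆ ⟦P(ψ₁,ψ₂,A)⟧^{W2A1}. -/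

import Mathlib

def prec {O α : Type*} (E : O → Set α → O → Prop) (A : Set α) (o o' : O) : Prop :=
  ∃ A', E o A' o' ∧ (A ∩ A').Nonempty

def precPlus {O α : Type*} (E : O → Set α → O → Prop) (A : Set α) : O → O → Prop :=
  Relation.TransGen (prec E A)

def witW1 {O α : Type*} (E : O → Set α → O → Prop) (S₂ : Set O) (A : Set α) : Set O :=
  ⋃ a ∈ A, {o | ∃ o' ∈ S₂, precPlus E {a} o' o}

def witW2 {O α : Type*} (E : O → Set α → O → Prop) (S₂ : Set O) (A : Set α) : Set O :=
  {o | ∃ o' ∈ S₂, precPlus E A o' o}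

def agrA1 {O α : Type*} (E : O → Set α → O → Prop) (S₂ : Set O) (A : Set α) : Set O :=
  ⋂ a ∈ A, {o | ∀ o' ∈ S₂, ¬ precPlus E {a} o o'}

def agrA2 {O α : Type*} (E : O → Set α → O → Prop) (S₂ : Set O) (A : Set α) : Set O :=
  {o | ∀ o' ∈ S₂, ¬ precPlus E A o o'}

section Monotonicity

variable {O α : Type*} (E : O → Set α → O → Prop)

lemma prec_mono {A B : Set α} (h : A ⊆ B) {o o' : O} : prec E A o o' → prec E B o o'
  | ⟨A', hE, hA'⟩ => ⟨A', hE, hA'.mono (Set.inter_subset_inter_left A' h)⟩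

lemma precPlus_mono {A B : Set α} (h : A ⊆ B) {o o' : O} :
    precPlus E A o o' → precPlus E B o o' :=
  Relation.TransGen.mono (fun _ _ => prec_mono E h) _ _

lemma witW1_subset_witW2 (S₂ : Set O) (A : Set α) : witW1 E S₂ A ⊆ witW2 E S₂ A :=
  Set.iUnion₂_subset fun _ ha _ ⟨o', hS, hp⟩ =>
    ⟨o', hS, precPlus_mono E (Set.singleton_subset_iff.mpr ha) hp⟩

lemma agrA2_subset_agrA1 (S₂ : Set O) (A : Set α) : agrA2 E S₂ A ⊆ agrA1 E S₂ A :=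
  Set.subset_iInter₂ fun _ ha _ ho o' hS hp =>
    ho o' hS (precPlus_mono E (Set.singleton_subset_iff.mpr ha) hp)

end Monotonicity

/-- The four collaborative semantics of `P(ψ₁, ψ₂, A)` and their inclusions. -/
theorem collab_semantics_inclusions {O α : Type*} (E : O → Set α → O → Prop)
    (S₁ S₂ : Set O) (A : Set α) :
    (S₁ ∩ witW1 E S₂ A ∩ agrA2 E S₂ A ⊆ S₁ ∩ witW1 E S₂ A ∩ agrA1 E S₂ A) ∧
    (S₁ ∩ witW1 E S₂ A ∩ agrA2 E S₂ A ⊆ S₁ ∩ witW2 E S₂ A ∩ agrA2 E S₂ A) ∧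
    (S₁ ∩ witW1 E S₂ A ∩ agrA1 E S₂ A ⊆ S₁ ∩ witW2 E S₂ A ∩ agrA1 E S₂ A) ∧
    (S₁ ∩ witW2 E S₂ A ∩ agrA2 E S₂ A ⊆ S₁ ∩ witW2 E S₂ A ∩ agrA1 E S₂ A) := by
  have hW : S₁ ∩ witW1 E S₂ A ⊆ S₁ ∩ witW2 E S₂ A :=
    Set.inter_subset_inter_right S₁ (witW1_subset_witW2 E S₂ A)
  have hA := agrA2_subset_agrA1 E S₂ A
  exact ⟨Set.inter_subset_inter_right _ hA, Set.inter_subset_inter_left _ hW,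
    Set.inter_subset_inter_left _ hW, Set.inter_subset_inter_right _ hA⟩
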